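/- Let 0 ≤ a < b ≤ 1 and suppose q, w ∈ L²(I,ℝ) satisfy ∫₀¹ q² = ∫₀¹ w² = 1 together with: (1) q(t) ≥ 0 and w(t) ≥ 0 for almost every t ∈ (a,b); (2) ∫ₐᵇ q(t)² dt = ∫ₐᵇ w(t)² dt; (3) q(t) = w(t) for almost every t ∉ (a,b). Then [q] = [w]. -/

import Mathlib

open MeasureTheory Set Filter

noncomputable section

/-- Lebesgue measure restricted to the unit interval `I = [0,1]`. -/
def μ01 : Measure ℝ := volume.restrict (Set.Icc (0:ℝ) 1)

/-- An element of the reparametrization semigroup `Γ̃`: an absolutely continuous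
`γ : I → I` with `γ 0 = 0`, `γ 1 = 1`, and `γ' ≥ 0` a.e.; absolute continuity is
encoded by the data of an integrable a.e. derivative `deriv'` with
`γ t = ∫₀ᵗ deriv'`. -/
structure GammaTilde where
  toFun : ℝ → ℝ
  deriv' : ℝ → ℝ
  integrableOn : IntegrableOn deriv' (Set.Icc (0:ℝ) 1) volume
  nonneg : ∀ᵐ t ∂μ01, 0 ≤ deriv' t
  map_zero : toFun 0 = 0
  map_one : toFun 1 = 1
  eq_integral : ∀ t ∈ Set.Icc (0:ℝ) 1, toFun t = ∫ u in (0:ℝ)..t, deriv' u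

/-- `γ ∈ Γ` iff moreover `γ' > 0` almost everywhere. -/
def GammaTilde.IsInGamma (γ : GammaTilde) : Prop := ∀ᵐ t ∂μ01, 0 < γ.deriv' t

variable {E : Type*} [NormedAddCommGroup E] [InnerProductSpace ℝ E]

/-- The right action `(q*γ)(t) = √(γ'(t)) • q(γ(t))`. -/
def act (q : ℝ → E) (γ : GammaTilde) : ℝ → E :=
  fun t => Real.sqrt (γ.deriv' t) • q (γ.toFun t)

/-- The `L²(I)` inner product `⟨f,g⟩ = ∫₀¹ f·g`. -/
def L2inner (f g : ℝ → E) : ℝ := ∫ t in Set.Icc (0:ℝ) 1, (inner ℝ (f t) (g t) : ℝ)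

/-- The `L²(I)` distance. -/
def L2dist (f g : ℝ → E) : ℝ := Real.sqrt (∫ t in Set.Icc (0:ℝ) 1, ‖f t - g t‖^2)

/-- The orbit `qΓ` of `q` under `Γ` (up to a.e. equality, as befits `L²`). -/
def orbit (q : ℝ → E) : Set (ℝ → E) :=
  {p | ∃ γ : GammaTilde, γ.IsInGamma ∧ p =ᵐ[μ01] act q γ}

/-- The orbit `qΓ̃` of `q` under the semigroup `Γ̃` (up to a.e. equality). -/
def orbitTilde (q : ℝ → E) : Set (ℝ → E) :=
  {p | ∃ γ : GammaTilde, p =ᵐ[μ01] act q γ}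

/-- The closure `[q]` of `qΓ` in `L²(I)`. -/
def orbitClosure (q : ℝ → E) : Set (ℝ → E) :=
  {p | MemLp p 2 μ01 ∧ ∀ ε > 0, ∃ r ∈ orbit q, L2dist r p < ε}

/-!
Write `flatten a b u` for `u` with its values on `(a,b)` replaced by the constant
`c = (∫ₐᵇ u² / (b - a))^{1/2}`. The hypotheses say exactly that `flatten a b q = flatten a b w`
a.e., so it suffices to show `[u] = [flatten a b u]` for `u ∈ L²` with `u ≥ 0` on `(a,b)`.

For `η > 0` let `γ_η ∈ Γ` have derivative `1` off `(a,b)` and proportional to `u² + η` on `(a,b)`,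
normalised so that `γ_η` fixes `a` and `b`. Then `(flatten a b u) * γ_η` agrees with `u` off
`(a,b)` and equals `c √γ_η'` on `(a,b)`, which tends to `√(u²) = u` in `L²` as `η → 0` by
dominated convergence; so `u ∈ [flatten a b u]`. Since `γ_η'` is bounded below, `γ_η` has an
inverse in `Γ`, and as `Γ` acts by isometries this gives `flatten a b u ∈ [u]`. Membership in
orbit closures is transitive, because `Γ` is closed under composition and acts isometrically.
-/

open scoped ENNReal Topology

instance : IsFiniteMeasure μ01 := by unfold μ01; infer_instance

namespace GammaTilde

variable (γ : GammaTilde)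

lemma intervalIntegrable_deriv {s t : ℝ} (hs : s ∈ Icc (0:ℝ) 1) (ht : t ∈ Icc (0:ℝ) 1) :
    IntervalIntegrable γ.deriv' volume s t :=
  (γ.integrableOn.mono_set (uIcc_subset_Icc hs ht)).intervalIntegrable

lemma integral_deriv {s t : ℝ} (hs : s ∈ Icc (0:ℝ) 1) (ht : t ∈ Icc (0:ℝ) 1) :
    ∫ u in s..t, γ.deriv' u = γ.toFun t - γ.toFun s := by
  have h0 : (0:ℝ) ∈ Icc (0:ℝ) 1 := left_mem_Icc.2 zero_le_one
  rw [γ.eq_integral t ht, γ.eq_integral s hs, eq_sub_iff_add_eq',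
    intervalIntegral.integral_add_adjacent_intervals (γ.intervalIntegrable_deriv h0 hs)
      (γ.intervalIntegrable_deriv hs ht)]

lemma monotoneOn : MonotoneOn γ.toFun (Icc 0 1) := by
  intro s hs t ht hst
  have hnonneg : 0 ≤ ∫ u in s..t, γ.deriv' u :=
    intervalIntegral.integral_nonneg_of_ae_restrict hst
      (ae_restrict_of_ae_restrict_of_subset (Icc_subset_Icc hs.1 ht.2) γ.nonneg)
  linarith [γ.integral_deriv hs ht]

lemma continuousOn : ContinuousOn γ.toFun (Icc 0 1) := by
  have h := intervalIntegral.continuousOn_primitive_interval (μ := volume)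
    (by rw [uIcc_of_le zero_le_one]; exact γ.integrableOn)
  rw [uIcc_of_le zero_le_one] at h
  exact h.congr γ.eq_integral

lemma mapsTo : MapsTo γ.toFun (Icc 0 1) (Icc 0 1) := fun _ ht =>
  ⟨γ.map_zero ▸ γ.monotoneOn (left_mem_Icc.2 zero_le_one) ht ht.1,
    γ.map_one ▸ γ.monotoneOn ht (right_mem_Icc.2 zero_le_one) ht.2⟩

lemma aemeasurable_toFun {t : ℝ} (ht : t ≤ 1) : AEMeasurable γ.toFun (volume.restrict (Icc 0 t)) :=
  (γ.continuousOn.mono (Icc_subset_Icc_right ht)).aemeasurable measurableSet_Icc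

lemma aemeasurable_toFun_one : AEMeasurable γ.toFun μ01 := γ.aemeasurable_toFun le_rfl

lemma toFun_eq_self_of_deriv_eq_one {a b t : ℝ}
    (h : ∀ s ∈ Icc (0:ℝ) 1 \ Ioo a b, γ.deriv' s = 1) (ht : t ∈ Icc (0:ℝ) 1 \ Ioo a b) :
    γ.toFun t = t := by
  have h0 : (0:ℝ) ∈ Icc (0:ℝ) 1 := left_mem_Icc.2 zero_le_one
  have h1 : (1:ℝ) ∈ Icc (0:ℝ) 1 := right_mem_Icc.2 zero_le_one
  rcases le_or_gt t a with hta | hat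
  · have := γ.integral_deriv h0 ht.1
    rw [intervalIntegral.integral_congr (g := fun _ => (1:ℝ)) fun s hs => h s ?_] at this
    · simpa [γ.map_zero] using this.symm
    rw [uIcc_of_le ht.1.1] at hs
    exact ⟨⟨hs.1, hs.2.trans ht.1.2⟩, fun hs' => (hs'.1.trans_le (hs.2.trans hta)).false⟩
  · have hbt : b ≤ t := not_lt.1 fun htb => ht.2 ⟨hat, htb⟩
    have := γ.integral_deriv ht.1 h1
    rw [intervalIntegral.integral_congr (g := fun _ => (1:ℝ)) fun s hs => h s ?_] at this
    · simp only [intervalIntegral.integral_const, smul_eq_mul, mul_one, γ.map_one] at this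
      linarith
    rw [uIcc_of_le ht.1.2] at hs
    exact ⟨⟨ht.1.1.trans hs.1, hs.2⟩, fun hs' => (hs'.2.trans_le (hbt.trans hs.1)).false⟩

lemma strictMonoOn_of_le_deriv {c : ℝ} (hc : 0 < c) (hγc : ∀ t ∈ Icc (0:ℝ) 1, c ≤ γ.deriv' t) :
    StrictMonoOn γ.toFun (Icc 0 1) := by
  intro s hs t ht hst
  have hle : ∫ _ in s..t, c ≤ ∫ u in s..t, γ.deriv' u :=
    intervalIntegral.integral_mono_on hst.le intervalIntegrable_const
      (γ.intervalIntegrable_deriv hs ht) fun u hu => hγc u (Icc_subset_Icc hs.1 ht.2 hu)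
  rw [intervalIntegral.integral_const, smul_eq_mul, γ.integral_deriv hs ht] at hle
  nlinarith

lemma isInGamma_of_le_deriv {c : ℝ} (hc : 0 < c) (hγc : ∀ t ∈ Icc (0:ℝ) 1, c ≤ γ.deriv' t) :
    γ.IsInGamma :=
  (ae_restrict_mem measurableSet_Icc).mono fun t ht => hc.trans_le (hγc t ht)

lemma lintegral_deriv {t : ℝ} (ht : t ∈ Icc (0:ℝ) 1) :
    ∫⁻ u in Icc 0 t, ENNReal.ofReal (γ.deriv' u) = ENNReal.ofReal (γ.toFun t) := by
  have hsub : Icc 0 t ⊆ Icc (0:ℝ) 1 := Icc_subset_Icc_right ht.2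
  rw [← ofReal_integral_eq_lintegral_ofReal (γ.integrableOn.mono_set hsub)
    (ae_restrict_of_ae_restrict_of_subset hsub γ.nonneg), integral_Icc_eq_integral_Ioc,
    ← intervalIntegral.integral_of_le ht.1, γ.integral_deriv (left_mem_Icc.2 zero_le_one) ht,
    γ.map_zero, sub_zero]

lemma exists_preimage_Iic_inter_Icc {t x : ℝ} (ht : t ∈ Icc (0:ℝ) 1) (hx : 0 ≤ x) :
    ∃ v ∈ Icc 0 t, γ.toFun v = min x (γ.toFun t) ∧ γ.toFun ⁻¹' Iic x ∩ Icc 0 t = Icc 0 v := by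
  have hsub : Icc 0 t ⊆ Icc (0:ℝ) 1 := Icc_subset_Icc_right ht.2
  set S := γ.toFun ⁻¹' Iic x ∩ Icc 0 t
  have hS : IsClosed S := by
    rw [show S = Icc 0 t ∩ γ.toFun ⁻¹' Iic x from inter_comm _ _]
    exact (γ.continuousOn.mono hsub).preimage_isClosed_of_isClosed isClosed_Icc isClosed_Iic
  have h0S : (0:ℝ) ∈ S := ⟨by simpa [γ.map_zero] using hx, le_rfl, ht.1⟩
  have hbdd : BddAbove S := ⟨t, fun s hs => hs.2.2⟩
  have hvS : sSup S ∈ S := hS.csSup_mem ⟨0, h0S⟩ hbdd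
  have hmono : ∀ s ∈ Icc 0 t, γ.toFun s ≤ γ.toFun t := fun s hs =>
    γ.monotoneOn (hsub hs) (hsub (right_mem_Icc.2 ht.1)) hs.2
  obtain ⟨v, hv, hγv⟩ : min x (γ.toFun t) ∈ γ.toFun '' Icc (sSup S) t :=
    intermediate_value_Icc hvS.2.2 (γ.continuousOn.mono (Icc_subset_Icc hvS.2.1 ht.2))
      ⟨le_min hvS.1 (hmono _ hvS.2), min_le_right _ _⟩
  have hvS' : v ∈ S := ⟨hγv.trans_le (min_le_left _ _), hvS.2.1.trans hv.1, hv.2⟩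
  have hv_eq : v = sSup S := le_antisymm (le_csSup hbdd hvS') hv.1
  refine ⟨v, hvS'.2, hγv, Subset.antisymm (fun s hs => ⟨hs.2.1, hv_eq ▸ le_csSup hbdd hs⟩) ?_⟩
  intro s hs
  have hsv : γ.toFun s ≤ γ.toFun v :=
    γ.monotoneOn (hsub ⟨hs.1, hs.2.trans hvS'.2.2⟩) (hsub hvS'.2) hs.2
  exact ⟨hsv.trans (hγv.trans_le (min_le_left _ _)), hs.1, hs.2.trans hvS'.2.2⟩

/-- Both sides are finite measures; they agree on half-lines `Iic x`, whose preimages in `[0,t]`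
are the intervals `[0,v]` with `γ v = min x (γ t)`. -/
theorem map_withDensity_deriv {t : ℝ} (ht : t ∈ Icc (0:ℝ) 1) :
    ((volume.restrict (Icc 0 t)).withDensity fun u => ENNReal.ofReal (γ.deriv' u)).map γ.toFun
      = volume.restrict (Icc 0 (γ.toFun t)) := by
  set ν := (volume.restrict (Icc 0 t)).withDensity fun u => ENNReal.ofReal (γ.deriv' u)
  have hν : ∀ v ∈ Icc 0 t, ν (Icc 0 v) = ENNReal.ofReal (γ.toFun v) := fun v hv => by
    rw [withDensity_apply _ measurableSet_Icc, Measure.restrict_restrict measurableSet_Icc,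
      inter_eq_left.2 (Icc_subset_Icc_right hv.2), γ.lintegral_deriv ⟨hv.1, hv.2.trans ht.2⟩]
  have hconull : ν (Icc 0 t)ᶜ = 0 :=
    withDensity_absolutelyContinuous _ _ (ae_restrict_mem measurableSet_Icc)
  have : IsFiniteMeasure ν := ⟨by
    rw [← measure_inter_conull hconull, univ_inter, hν t (right_mem_Icc.2 ht.1)]
    exact ENNReal.ofReal_lt_top⟩
  have hγ : AEMeasurable γ.toFun ν :=
    (γ.aemeasurable_toFun ht.2).mono_ac (withDensity_absolutelyContinuous _ _)
  refine Measure.ext_of_Iic _ _ fun x => ?_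
  rw [Measure.map_apply_of_aemeasurable hγ measurableSet_Iic, ← measure_inter_conull hconull,
    Measure.restrict_apply measurableSet_Iic]
  rcases lt_or_ge x 0 with hx | hx
  · have hL : γ.toFun ⁻¹' Iic x ∩ Icc 0 t = ∅ := eq_empty_of_forall_notMem fun s hs =>
      (hx.trans_le (γ.mapsTo ⟨hs.2.1, hs.2.2.trans ht.2⟩).1).not_ge hs.1
    have hR : Iic x ∩ Icc 0 (γ.toFun t) = ∅ := eq_empty_of_forall_notMem fun s hs =>
      (hx.trans_le hs.2.1).not_ge hs.1
    rw [hL, hR, measure_empty, measure_empty]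
  · obtain ⟨v, hv, hγv, hpre⟩ := γ.exists_preimage_Iic_inter_Icc ht hx
    have hR : Iic x ∩ Icc 0 (γ.toFun t) = Icc 0 (min x (γ.toFun t)) := by
      ext s; simp only [mem_inter_iff, mem_Iic, mem_Icc, le_min_iff]; tauto
    rw [hpre, hν v hv, hγv, hR, Real.volume_Icc, sub_zero]

theorem lintegral_comp_mul_deriv {t : ℝ} (ht : t ∈ Icc (0:ℝ) 1) {g : ℝ → ℝ≥0∞}
    (hg : Measurable g) :
    ∫⁻ u in Icc 0 t, g (γ.toFun u) * ENNReal.ofReal (γ.deriv' u)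
      = ∫⁻ x in Icc 0 (γ.toFun t), g x := by
  have hd : AEMeasurable (fun u => ENNReal.ofReal (γ.deriv' u)) (volume.restrict (Icc 0 t)) :=
    (γ.integrableOn.mono_set (Icc_subset_Icc_right ht.2)).aemeasurable.ennreal_ofReal
  rw [← γ.map_withDensity_deriv ht, lintegral_map' hg.aemeasurable
    ((γ.aemeasurable_toFun ht.2).mono_ac (withDensity_absolutelyContinuous _ _)),
    lintegral_withDensity_eq_lintegral_mul₀ hd (g := fun u => g (γ.toFun u))
      (hg.comp_aemeasurable (γ.aemeasurable_toFun ht.2))]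
  simp only [Pi.mul_apply, mul_comm]

lemma lintegral_comp_mul_deriv_one {g : ℝ → ℝ≥0∞} (hg : Measurable g) :
    ∫⁻ u, g (γ.toFun u) * ENNReal.ofReal (γ.deriv' u) ∂μ01 = ∫⁻ x, g x ∂μ01 := by
  have h := γ.lintegral_comp_mul_deriv (right_mem_Icc.2 zero_le_one) hg
  rwa [γ.map_one] at h

lemma map_absolutelyContinuous (hγ : γ.IsInGamma) : μ01.map γ.toFun ≪ μ01 := by
  refine Measure.AbsolutelyContinuous.mk fun N hN hN0 => ?_
  have hint : ∫⁻ u, N.indicator 1 (γ.toFun u) * ENNReal.ofReal (γ.deriv' u) ∂μ01 = 0 := by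
    rw [γ.lintegral_comp_mul_deriv_one (measurable_one.indicator hN), lintegral_indicator_one hN,
      hN0]
  have hzero := (lintegral_eq_zero_iff' (((measurable_one.indicator hN).comp_aemeasurable
    γ.aemeasurable_toFun_one).mul γ.integrableOn.aemeasurable.ennreal_ofReal)).1 hint
  rw [Measure.map_apply_of_aemeasurable γ.aemeasurable_toFun_one hN,
    measure_eq_zero_iff_ae_notMem]
  filter_upwards [hzero, hγ] with u hu hpos hmem
  simp only [Pi.mul_apply, Function.comp_apply, Pi.zero_apply, Pi.one_apply, one_mul,
    indicator_of_mem (mem_preimage.1 hmem), ENNReal.ofReal_eq_zero] at hu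
  exact hpos.not_ge hu

lemma ae_comp (hγ : γ.IsInGamma) {p : ℝ → Prop} (hp : ∀ᵐ x ∂μ01, p x) :
    ∀ᵐ t ∂μ01, p (γ.toFun t) :=
  ae_of_ae_map γ.aemeasurable_toFun_one (γ.map_absolutelyContinuous hγ |>.ae_le hp)

lemma aestronglyMeasurable_comp {β : Type*} [TopologicalSpace β] (hγ : γ.IsInGamma)
    {f : ℝ → β} (hf : AEStronglyMeasurable f μ01) :
    AEStronglyMeasurable (fun t => f (γ.toFun t)) μ01 :=
  (hf.mono_ac (γ.map_absolutelyContinuous hγ)).comp_aemeasurable γ.aemeasurable_toFun_one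

def ofLIntegral (F D : ℝ → ℝ) (hD : AEStronglyMeasurable D μ01) (hD0 : ∀ᵐ t ∂μ01, 0 ≤ D t)
    (hF1 : F 1 = 1) (hF : ∀ t ∈ Icc (0:ℝ) 1, 0 ≤ F t)
    (hDF : ∀ t ∈ Icc (0:ℝ) 1, ∫⁻ u in Icc 0 t, ENNReal.ofReal (D u) = ENNReal.ofReal (F t)) :
    GammaTilde where
  toFun := F
  deriv' := D
  integrableOn := ⟨hD, (hasFiniteIntegral_iff_ofReal hD0).2 <|
    (hDF 1 (right_mem_Icc.2 zero_le_one)).trans_lt ENNReal.ofReal_lt_top⟩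
  nonneg := hD0
  map_zero := by
    have h := hDF 0 (left_mem_Icc.2 zero_le_one)
    rw [Icc_self, Measure.restrict_singleton, measure_singleton, zero_smul, lintegral_zero_measure,
      eq_comm, ENNReal.ofReal_eq_zero] at h
    exact le_antisymm h (hF 0 (left_mem_Icc.2 zero_le_one))
  map_one := hF1
  eq_integral t ht := by
    have hsub : Icc 0 t ⊆ Icc (0:ℝ) 1 := Icc_subset_Icc_right ht.2
    rw [intervalIntegral.integral_of_le ht.1, ← integral_Icc_eq_integral_Ioc,
      integral_eq_lintegral_of_nonneg_ae (ae_restrict_of_ae_restrict_of_subset hsub hD0)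
        (hD.mono_measure (Measure.restrict_mono hsub le_rfl)), hDF t ht,
      ENNReal.toReal_ofReal (hF t ht)]

def ofDensity (D : ℝ → ℝ) (hD : IntegrableOn D (Icc 0 1)) (hD0 : ∀ᵐ t ∂μ01, 0 ≤ D t)
    (hD1 : ∫ t in (0:ℝ)..1, D t = 1) : GammaTilde where
  toFun t := ∫ u in (0:ℝ)..t, D u
  deriv' := D
  integrableOn := hD
  nonneg := hD0
  map_zero := intervalIntegral.integral_same
  map_one := hD1
  eq_integral _ _ := rfl

lemma lintegral_deriv_comp_mul (δ : GammaTilde) (hγ : γ.IsInGamma) {t : ℝ}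
    (ht : t ∈ Icc (0:ℝ) 1) :
    ∫⁻ u in Icc 0 t, ENNReal.ofReal (δ.deriv' (γ.toFun u) * γ.deriv' u)
      = ENNReal.ofReal (δ.toFun (γ.toFun t)) := by
  obtain ⟨d, hdm, hd⟩ := δ.integrableOn.aemeasurable
  have hsub : Icc 0 t ⊆ Icc (0:ℝ) 1 := Icc_subset_Icc_right ht.2
  have hae : ∀ᵐ u ∂μ01, ENNReal.ofReal (δ.deriv' (γ.toFun u) * γ.deriv' u)
      = ENNReal.ofReal (d (γ.toFun u)) * ENNReal.ofReal (γ.deriv' u) := by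
    filter_upwards [γ.ae_comp hγ hd, γ.ae_comp hγ δ.nonneg] with u hdu hδu
    rw [ENNReal.ofReal_mul hδu, hdu]
  have hγt := γ.mapsTo ht
  calc ∫⁻ u in Icc 0 t, ENNReal.ofReal (δ.deriv' (γ.toFun u) * γ.deriv' u)
      = ∫⁻ u in Icc 0 t, ENNReal.ofReal (d (γ.toFun u)) * ENNReal.ofReal (γ.deriv' u) :=
        lintegral_congr_ae (ae_restrict_of_ae_restrict_of_subset hsub hae)
    _ = ∫⁻ x in Icc 0 (γ.toFun t), ENNReal.ofReal (d x) :=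
        γ.lintegral_comp_mul_deriv ht hdm.ennreal_ofReal
    _ = ∫⁻ x in Icc 0 (γ.toFun t), ENNReal.ofReal (δ.deriv' x) :=
        lintegral_congr_ae <| ae_restrict_of_ae_restrict_of_subset (Icc_subset_Icc_right hγt.2)
          (hd.mono fun x hx => by simp only [hx])
    _ = ENNReal.ofReal (δ.toFun (γ.toFun t)) := δ.lintegral_deriv hγt

/-- The composite `δ ∘ γ`; its derivative `δ'(γ) γ'` is well defined a.e. because `γ ∈ Γ`
pulls null sets back to null sets. -/
def comp (δ γ : GammaTilde) (hγ : γ.IsInGamma) : GammaTilde :=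
  ofLIntegral (fun t => δ.toFun (γ.toFun t)) (fun t => δ.deriv' (γ.toFun t) * γ.deriv' t)
    ((γ.aestronglyMeasurable_comp hγ δ.integrableOn.aestronglyMeasurable).mul
      γ.integrableOn.aestronglyMeasurable)
    (by filter_upwards [γ.ae_comp hγ δ.nonneg, γ.nonneg] with t h1 h2 using mul_nonneg h1 h2)
    (by simp only [γ.map_one, δ.map_one])
    (fun t ht => (δ.mapsTo (γ.mapsTo ht)).1)
    (fun _ ht => γ.lintegral_deriv_comp_mul δ hγ ht)

lemma comp_isInGamma {δ γ : GammaTilde} (hδ : δ.IsInGamma) (hγ : γ.IsInGamma) :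
    (δ.comp γ hγ).IsInGamma := by
  filter_upwards [γ.ae_comp hγ hδ, hγ] with t h1 h2 using mul_pos h1 h2

end GammaTilde

lemma act_sub (f g : ℝ → E) (γ : GammaTilde) : act f γ - act g γ = act (f - g) γ := by
  ext t; simp only [act, Pi.sub_apply, smul_sub]

lemma act_congr_ae {γ : GammaTilde} (hγ : γ.IsInGamma) {f g : ℝ → E} (h : f =ᵐ[μ01] g) :
    act f γ =ᵐ[μ01] act g γ :=
  (γ.ae_comp hγ h).mono fun t ht => by simp only [act, ht]

lemma act_comp (q : ℝ → E) (δ : GammaTilde) {γ : GammaTilde} (hγ : γ.IsInGamma) :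
    act q (δ.comp γ hγ) =ᵐ[μ01] act (act q δ) γ := by
  filter_upwards [γ.nonneg] with t ht
  simp only [act, GammaTilde.comp, GammaTilde.ofLIntegral, Real.sqrt_mul' _ ht, smul_smul, mul_comm]

lemma aestronglyMeasurable_act {γ : GammaTilde} (hγ : γ.IsInGamma) {f : ℝ → E}
    (hf : AEStronglyMeasurable f μ01) : AEStronglyMeasurable (act f γ) μ01 :=
  (Real.continuous_sqrt.comp_aestronglyMeasurable γ.integrableOn.aestronglyMeasurable).smul
    (γ.aestronglyMeasurable_comp hγ hf)

lemma enorm_sqrt_smul_rpow_two {d : ℝ} (hd : 0 ≤ d) (v : E) :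
    ‖√d • v‖ₑ ^ (2:ℝ) = ‖v‖ₑ ^ (2:ℝ) * ENNReal.ofReal d := by
  rw [enorm_smul, ENNReal.mul_rpow_of_nonneg _ _ zero_le_two, mul_comm,
    Real.enorm_of_nonneg (Real.sqrt_nonneg d), ENNReal.ofReal_rpow_of_nonneg (Real.sqrt_nonneg d)
      zero_le_two, Real.rpow_two, Real.sq_sqrt hd]

lemma eLpNorm_act {γ : GammaTilde} (hγ : γ.IsInGamma) {f : ℝ → E}
    (hf : AEStronglyMeasurable f μ01) : eLpNorm (act f γ) 2 μ01 = eLpNorm f 2 μ01 := by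
  simp only [eLpNorm_eq_lintegral_rpow_enorm_toReal two_ne_zero ENNReal.ofNat_ne_top,
    ENNReal.toReal_ofNat]
  congr 1
  calc ∫⁻ t, ‖act f γ t‖ₑ ^ (2:ℝ) ∂μ01
      = ∫⁻ t, ‖hf.mk f (γ.toFun t)‖ₑ ^ (2:ℝ) * ENNReal.ofReal (γ.deriv' t) ∂μ01 := by
        refine lintegral_congr_ae ?_
        filter_upwards [γ.nonneg, γ.ae_comp hγ hf.ae_eq_mk] with t ht hft
        rw [act, enorm_sqrt_smul_rpow_two ht, hft]
    _ = ∫⁻ x, ‖hf.mk f x‖ₑ ^ (2:ℝ) ∂μ01 :=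
        γ.lintegral_comp_mul_deriv_one (hf.stronglyMeasurable_mk.enorm.pow_const _)
    _ = ∫⁻ x, ‖f x‖ₑ ^ (2:ℝ) ∂μ01 :=
        lintegral_congr_ae (hf.ae_eq_mk.mono fun x hx => by simp only [hx])

lemma memLp_act {γ : GammaTilde} (hγ : γ.IsInGamma) {f : ℝ → E} (hf : MemLp f 2 μ01) :
    MemLp (act f γ) 2 μ01 :=
  ⟨aestronglyMeasurable_act hγ hf.1, by rw [eLpNorm_act hγ hf.1]; exact hf.2⟩

section L2dist

variable {F : Type*} [NormedAddCommGroup F]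

lemma L2dist_eq_toReal_eLpNorm {f g : ℝ → F} (hf : AEStronglyMeasurable f μ01)
    (hg : AEStronglyMeasurable g μ01) : L2dist f g = (eLpNorm (f - g) 2 μ01).toReal := by
  rw [L2dist, eLpNorm_eq_lintegral_rpow_enorm_toReal two_ne_zero ENNReal.ofNat_ne_top,
    ← ENNReal.toReal_rpow]
  change √(∫ t, ‖(f - g) t‖ ^ 2 ∂μ01) = _
  rw [integral_eq_lintegral_of_nonneg_ae (f := fun t => ‖(f - g) t‖ ^ 2)
      (ae_of_all _ fun _ => by positivity) ((hf.sub hg).norm.pow 2), Real.sqrt_eq_rpow,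
    ENNReal.toReal_ofNat]
  congr 2
  refine lintegral_congr fun t => ?_
  rw [← ofReal_norm, ENNReal.ofReal_rpow_of_nonneg (norm_nonneg _) zero_le_two,
    Real.rpow_two, Pi.sub_apply]

lemma L2dist_congr_ae {f f' g g' : ℝ → F} (hf : f =ᵐ[μ01] f') (hg : g =ᵐ[μ01] g') :
    L2dist f g = L2dist f' g' := by
  unfold L2dist
  congr 1
  exact integral_congr_ae (hf.mp (hg.mono fun t hgt hft => by simp only [hft, hgt]))

lemma L2dist_comm (f g : ℝ → F) : L2dist f g = L2dist g f := by
  simp only [L2dist, norm_sub_rev]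

lemma L2dist_triangle {f g h : ℝ → F} (hf : MemLp f 2 μ01) (hg : MemLp g 2 μ01)
    (hh : MemLp h 2 μ01) : L2dist f h ≤ L2dist f g + L2dist g h := by
  rw [L2dist_eq_toReal_eLpNorm hf.1 hh.1, L2dist_eq_toReal_eLpNorm hf.1 hg.1,
    L2dist_eq_toReal_eLpNorm hg.1 hh.1, ← ENNReal.toReal_add (hf.sub hg).eLpNorm_ne_top
      (hg.sub hh).eLpNorm_ne_top, ← sub_add_sub_cancel f g h]
  exact ENNReal.toReal_mono (ENNReal.add_ne_top.2 ⟨(hf.sub hg).eLpNorm_ne_top,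
    (hg.sub hh).eLpNorm_ne_top⟩) (eLpNorm_add_le (hf.sub hg).1 (hg.sub hh).1 one_le_two)

lemma L2dist_act {γ : GammaTilde} (hγ : γ.IsInGamma) {f g : ℝ → E}
    (hf : AEStronglyMeasurable f μ01) (hg : AEStronglyMeasurable g μ01) :
    L2dist (act f γ) (act g γ) = L2dist f g := by
  rw [L2dist_eq_toReal_eLpNorm (aestronglyMeasurable_act hγ hf) (aestronglyMeasurable_act hγ hg),
    act_sub, eLpNorm_act hγ (hf.sub hg), L2dist_eq_toReal_eLpNorm hf hg]

end L2dist

lemma act_mem_orbit (q : ℝ → E) {γ : GammaTilde} (hγ : γ.IsInGamma) : act q γ ∈ orbit q :=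
  ⟨γ, hγ, EventuallyEq.rfl⟩

lemma orbit_congr_ae {f g : ℝ → E} (h : f =ᵐ[μ01] g) : orbit f = orbit g := by
  ext p
  exact ⟨fun ⟨γ, hγ, hp⟩ => ⟨γ, hγ, hp.trans (act_congr_ae hγ h)⟩,
    fun ⟨γ, hγ, hp⟩ => ⟨γ, hγ, hp.trans (act_congr_ae hγ h.symm)⟩⟩

lemma orbitClosure_congr_ae {f g : ℝ → E} (h : f =ᵐ[μ01] g) :
    orbitClosure f = orbitClosure g := by
  simp only [orbitClosure, orbit_congr_ae h]

lemma orbitClosure_subset_of_mem {q w : ℝ → E} (hq : MemLp q 2 μ01) (hw : w ∈ orbitClosure q) :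
    orbitClosure w ⊆ orbitClosure q := by
  rintro p ⟨hp, hpw⟩
  refine ⟨hp, fun ε hε => ?_⟩
  obtain ⟨r, ⟨γ, hγ, hr⟩, hrp⟩ := hpw (ε / 2) (half_pos hε)
  obtain ⟨r', ⟨δ, hδ, hr'⟩, hr'w⟩ := hw.2 (ε / 2) (half_pos hε)
  have hδγ := GammaTilde.comp_isInGamma hδ hγ
  have hr_mem : MemLp r 2 μ01 := (memLp_act hγ hw.1).ae_eq hr.symm
  have hr'_meas : AEStronglyMeasurable r' μ01 := (aestronglyMeasurable_act hδ hq.1).congr hr'.symm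
  have hdist : L2dist (act q (δ.comp γ hγ)) r = L2dist r' w := by
    rw [L2dist_congr_ae ((act_comp q δ hγ).trans (act_congr_ae hγ hr'.symm)) hr,
      L2dist_act hγ hr'_meas hw.1.1]
  refine ⟨_, act_mem_orbit q hδγ, ?_⟩
  calc L2dist (act q (δ.comp γ hγ)) p
      ≤ L2dist (act q (δ.comp γ hγ)) r + L2dist r p := L2dist_triangle (memLp_act hδγ hq) hr_mem hp
    _ < ε / 2 + ε / 2 := by rw [hdist]; exact add_lt_add hr'w hrp
    _ = ε := add_halves ε

lemma orbitClosure_eq_of_mem_of_mem {q w : ℝ → E} (hqw : q ∈ orbitClosure w)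
    (hwq : w ∈ orbitClosure q) : orbitClosure q = orbitClosure w :=
  (orbitClosure_subset_of_mem hwq.1 hqw).antisymm (orbitClosure_subset_of_mem hqw.1 hwq)

namespace GammaTilde

variable (γ : GammaTilde)

/-- The cut-off `max s 0` keeps the set nonempty, so that `invFun` is monotone on all of `ℝ`. -/
def invFun (s : ℝ) : ℝ := sSup {t ∈ Icc (0:ℝ) 1 | γ.toFun t ≤ max s 0}

lemma zero_mem_invFun_set (s : ℝ) : (0:ℝ) ∈ {t ∈ Icc (0:ℝ) 1 | γ.toFun t ≤ max s 0} :=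
  ⟨left_mem_Icc.2 zero_le_one, γ.map_zero.trans_le (le_max_right s 0)⟩

lemma invFun_mem_Icc (s : ℝ) : γ.invFun s ∈ Icc 0 1 :=
  ⟨le_csSup ⟨1, fun _ ht => ht.1.2⟩ (γ.zero_mem_invFun_set s),
    csSup_le ⟨0, γ.zero_mem_invFun_set s⟩ fun _ ht => ht.1.2⟩

lemma monotone_invFun : Monotone γ.invFun := fun s _ hs =>
  csSup_le_csSup ⟨1, fun _ ht => ht.1.2⟩ ⟨0, γ.zero_mem_invFun_set s⟩
    fun _ ht => ⟨ht.1, ht.2.trans (max_le_max hs le_rfl)⟩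

lemma toFun_invFun {s : ℝ} (hs : s ∈ Icc (0:ℝ) 1) : γ.toFun (γ.invFun s) = s := by
  obtain ⟨v, hv, hγv, hpre⟩ := γ.exists_preimage_Iic_inter_Icc (right_mem_Icc.2 zero_le_one) hs.1
  have hset : {t ∈ Icc (0:ℝ) 1 | γ.toFun t ≤ max s 0} = Icc 0 v := by
    rw [max_eq_left hs.1, ← hpre, inter_comm]; rfl
  rw [invFun, hset, csSup_Icc hv.1, hγv, γ.map_one, min_eq_left hs.2]

lemma invFun_toFun (hinj : InjOn γ.toFun (Icc 0 1)) {t : ℝ} (ht : t ∈ Icc (0:ℝ) 1) :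
    γ.invFun (γ.toFun t) = t :=
  hinj (γ.invFun_mem_Icc _) ht (γ.toFun_invFun (γ.mapsTo ht))

lemma lintegral_inv_deriv_invFun {c : ℝ} (hc : 0 < c)
    (hγc : ∀ t ∈ Icc (0:ℝ) 1, c ≤ γ.deriv' t) (hmeas : Measurable γ.deriv') {s : ℝ}
    (hs : s ∈ Icc (0:ℝ) 1) :
    ∫⁻ r in Icc 0 s, ENNReal.ofReal (γ.deriv' (γ.invFun r))⁻¹ = ENNReal.ofReal (γ.invFun s) := by
  have hτ := γ.invFun_mem_Icc s
  have key := γ.lintegral_comp_mul_deriv hτ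
    (g := fun r => ENNReal.ofReal (γ.deriv' (γ.invFun r))⁻¹)
    (hmeas.comp γ.monotone_invFun.measurable).inv.ennreal_ofReal
  rw [γ.toFun_invFun hs] at key
  rw [← key, setLIntegral_congr_fun measurableSet_Icc (g := fun _ => 1) fun u hu => ?_,
    setLIntegral_one, Real.volume_Icc, sub_zero]
  have huI : u ∈ Icc (0:ℝ) 1 := ⟨hu.1, hu.2.trans hτ.2⟩
  have hpos := hc.trans_le (hγc u huI)
  rw [γ.invFun_toFun (γ.strictMonoOn_of_le_deriv hc hγc).injOn huI,
    ← ENNReal.ofReal_mul (inv_nonneg.2 hpos.le), inv_mul_cancel₀ hpos.ne', ENNReal.ofReal_one]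

def inv {c : ℝ} (hc : 0 < c) (hγc : ∀ t ∈ Icc (0:ℝ) 1, c ≤ γ.deriv' t)
    (hmeas : Measurable γ.deriv') : GammaTilde :=
  ofLIntegral γ.invFun (fun s => (γ.deriv' (γ.invFun s))⁻¹)
    (hmeas.comp γ.monotone_invFun.measurable).inv.aestronglyMeasurable
    (ae_of_all _ fun s => inv_nonneg.2 (hc.le.trans (hγc _ (γ.invFun_mem_Icc s))))
    ((congrArg γ.invFun γ.map_one).symm.trans
      (γ.invFun_toFun (γ.strictMonoOn_of_le_deriv hc hγc).injOn (right_mem_Icc.2 zero_le_one)))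
    (fun s _ => (γ.invFun_mem_Icc s).1)
    (fun _ hs => γ.lintegral_inv_deriv_invFun hc hγc hmeas hs)

lemma inv_isInGamma {c : ℝ} (hc : 0 < c) (hγc : ∀ t ∈ Icc (0:ℝ) 1, c ≤ γ.deriv' t)
    (hmeas : Measurable γ.deriv') : (γ.inv hc hγc hmeas).IsInGamma :=
  ae_of_all _ fun s => inv_pos.2 (hc.trans_le (hγc _ (γ.invFun_mem_Icc s)))

lemma act_act_inv {c : ℝ} (hc : 0 < c) (hγc : ∀ t ∈ Icc (0:ℝ) 1, c ≤ γ.deriv' t)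
    (hmeas : Measurable γ.deriv') (f : ℝ → E) :
    act (act f (γ.inv hc hγc hmeas)) γ =ᵐ[μ01] f := by
  filter_upwards [ae_restrict_mem measurableSet_Icc] with t ht
  have hpos := hc.trans_le (hγc t ht)
  simp only [act, inv, ofLIntegral, γ.invFun_toFun (γ.strictMonoOn_of_le_deriv hc hγc).injOn ht,
    smul_smul, ← Real.sqrt_mul hpos.le, mul_inv_cancel₀ hpos.ne', Real.sqrt_one, one_smul]

lemma L2dist_act_inv {c : ℝ} (hc : 0 < c) (hγc : ∀ t ∈ Icc (0:ℝ) 1, c ≤ γ.deriv' t)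
    (hmeas : Measurable γ.deriv') {f g : ℝ → E} (hf : AEStronglyMeasurable f μ01)
    (hg : AEStronglyMeasurable g μ01) :
    L2dist (act f (γ.inv hc hγc hmeas)) g = L2dist f (act g γ) := by
  rw [← L2dist_act (γ.isInGamma_of_le_deriv hc hγc)
    (aestronglyMeasurable_act (γ.inv_isInGamma hc hγc hmeas) hf) hg,
    L2dist_congr_ae (γ.act_act_inv hc hγc hmeas f) EventuallyEq.rfl]

end GammaTilde

lemma sq_sqrt_div_mul_sqrt_le {m L η : ℝ} (x : ℝ) (hm : 0 ≤ m) (hL : 0 < L) (hη : 0 ≤ η) :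
    (√(m / L) * √((x ^ 2 + η) * (L / (m + η * L)))) ^ 2 ≤ x ^ 2 + η := by
  rw [mul_pow, Real.sq_sqrt (by positivity), Real.sq_sqrt (by positivity)]
  rcases (add_nonneg hm (mul_nonneg hη hL.le)).eq_or_lt with h | h
  · rw [← h, div_zero, mul_zero, mul_zero]; positivity
  · calc m / L * ((x ^ 2 + η) * (L / (m + η * L))) = (x ^ 2 + η) * (m / (m + η * L)) := by
          field_simp
      _ ≤ (x ^ 2 + η) * 1 :=
          mul_le_mul_of_nonneg_left ((div_le_one h).2 (by nlinarith)) (by positivity)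
      _ = x ^ 2 + η := mul_one _

lemma tendsto_sqrt_div_mul_sqrt {m L : ℝ} (x : ℝ) (hm : 0 < m) (hL : 0 < L) :
    Tendsto (fun η => √(m / L) * √((x ^ 2 + η) * (L / (m + η * L)))) (𝓝 0) (𝓝 |x|) := by
  have hcont : ContinuousAt (fun η => √(m / L) * √((x ^ 2 + η) * (L / (m + η * L)))) 0 := by
    fun_prop (disch := simp [hm.ne'])
  convert hcont.tendsto using 2
  rw [zero_mul, add_zero, add_zero, ← Real.sqrt_mul (div_nonneg hm.le hL.le), ← Real.sqrt_sq_eq_abs]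
  congr 1
  field_simp

section Flattening

variable {a b : ℝ} {u : ℝ → ℝ}

def flatten (a b : ℝ) (u : ℝ → ℝ) : ℝ → ℝ :=
  (Ioo a b).piecewise (fun _ => √((∫ s in Ioo a b, u s ^ 2) / (b - a))) u

/-- Normalised so that its integral over `(a,b)` is `b - a`. -/
def flatteningDensity (a b : ℝ) (u : ℝ → ℝ) (η t : ℝ) : ℝ :=
  if t ∈ Ioo a b then (u t ^ 2 + η) * ((b - a) / ((∫ s in Ioo a b, u s ^ 2) + η * (b - a)))
  else 1

def flatteningError (a b : ℝ) (u : ℝ → ℝ) (η t : ℝ) : ℝ :=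
  (√((∫ s in Ioo a b, u s ^ 2) / (b - a)) *
    √((u t ^ 2 + η) * ((b - a) / ((∫ s in Ioo a b, u s ^ 2) + η * (b - a)))) - u t) ^ 2

lemma flatteningDensity_of_mem {η t : ℝ} (ht : t ∈ Ioo a b) :
    flatteningDensity a b u η t
      = (u t ^ 2 + η) * ((b - a) / ((∫ s in Ioo a b, u s ^ 2) + η * (b - a))) :=
  if_pos ht

lemma flatteningDensity_of_notMem {η t : ℝ} (ht : t ∉ Ioo a b) : flatteningDensity a b u η t = 1 :=
  if_neg ht

lemma exists_pos_le_flatteningDensity (hab : a < b) {η : ℝ} (hη : 0 < η) :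
    ∃ c > 0, ∀ t, c ≤ flatteningDensity a b u η t := by
  have hm : 0 ≤ ∫ s in Ioo a b, u s ^ 2 := integral_nonneg fun _ => sq_nonneg _
  have hk : 0 < (b - a) / ((∫ s in Ioo a b, u s ^ 2) + η * (b - a)) :=
    div_pos (sub_pos.2 hab) (by nlinarith)
  refine ⟨min 1 (η * _), lt_min one_pos (mul_pos hη hk), fun t => ?_⟩
  unfold flatteningDensity
  split_ifs
  · exact (min_le_right _ _).trans
      (mul_le_mul_of_nonneg_right (le_add_of_nonneg_left (sq_nonneg _)) hk.le)
  · exact min_le_left _ _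

lemma flatteningDensity_pos (hab : a < b) {η : ℝ} (hη : 0 < η) (t : ℝ) :
    0 < flatteningDensity a b u η t := by
  obtain ⟨c, hc, hcD⟩ := exists_pos_le_flatteningDensity (u := u) hab hη
  exact hc.trans_le (hcD t)

lemma measurable_flatteningDensity (hu : Measurable u) (η : ℝ) :
    Measurable (flatteningDensity a b u η) :=
  Measurable.ite measurableSet_Ioo (((hu.pow_const 2).add_const η).mul_const _) measurable_const

lemma integrableOn_flatteningDensity (hu : Measurable u) (hu2 : MemLp u 2 μ01) (η : ℝ) :
    IntegrableOn (flatteningDensity a b u η) (Icc 0 1) := by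
  set k := (b - a) / ((∫ s in Ioo a b, u s ^ 2) + η * (b - a))
  refine Integrable.mono' (g := fun t => |(u t ^ 2 + η) * k| + 1)
    (((hu2.integrable_sq.add (integrable_const η)).mul_const k).abs.add (integrable_const 1))
    (measurable_flatteningDensity hu η).aestronglyMeasurable (ae_of_all _ fun t => ?_)
  unfold flatteningDensity
  split_ifs
  · exact le_add_of_nonneg_right zero_le_one
  · simp only [norm_one, le_add_iff_nonneg_left]
    positivity

lemma integral_flatteningDensity (ha : 0 ≤ a) (hab : a < b) (hb : b ≤ 1) (hu : Measurable u)
    (hu2 : MemLp u 2 μ01) {η : ℝ} (hη : 0 < η) :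
    ∫ t in (0:ℝ)..1, flatteningDensity a b u η t = 1 := by
  have hsub : Ioo a b ⊆ Icc (0:ℝ) 1 := Ioo_subset_Icc_self.trans (Icc_subset_Icc ha hb)
  have hm : 0 ≤ ∫ s in Ioo a b, u s ^ 2 := integral_nonneg fun _ => sq_nonneg _
  have hIoo : ∫ t in Ioo a b, flatteningDensity a b u η t = b - a := by
    rw [setIntegral_congr_fun measurableSet_Ioo fun t ht => flatteningDensity_of_mem ht,
      integral_mul_const, integral_add (IntegrableOn.mono_set hu2.integrable_sq hsub)
        (integrable_const η), setIntegral_const, Real.volume_real_Ioo_of_le hab.le, smul_eq_mul]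
    have hden : (∫ s in Ioo a b, u s ^ 2) + η * (b - a) ≠ 0 :=
      (add_pos_of_nonneg_of_pos hm (mul_pos hη (sub_pos.2 hab))).ne'
    rw [mul_comm (b - a) η]
    field_simp
  have hrest : ∫ t in Icc 0 1 \ Ioo a b, flatteningDensity a b u η t = 1 - (b - a) := by
    rw [setIntegral_congr_fun (measurableSet_Icc.diff measurableSet_Ioo)
        fun t ht => flatteningDensity_of_notMem ht.2,
      setIntegral_const, smul_eq_mul, mul_one,
      measureReal_sdiff hsub measurableSet_Ioo measure_Icc_lt_top.ne,
      Real.volume_real_Icc, Real.volume_real_Ioo_of_le hab.le]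
    simp
  rw [intervalIntegral.integral_of_le zero_le_one, ← integral_Icc_eq_integral_Ioc,
    ← integral_inter_add_sdiff measurableSet_Ioo (integrableOn_flatteningDensity hu hu2 η),
    inter_eq_right.2 hsub, hIoo, hrest]
  ring

section Reparametrization

variable (ha : 0 ≤ a) (hab : a < b) (hb : b ≤ 1) (hu : Measurable u) (hu2 : MemLp u 2 μ01)
  {η : ℝ} (hη : 0 < η)

def flattening : GammaTilde :=
  GammaTilde.ofDensity (flatteningDensity a b u η) (integrableOn_flatteningDensity hu hu2 η)
    (ae_of_all _ fun t => (flatteningDensity_pos hab hη t).le)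
    (integral_flatteningDensity ha hab hb hu hu2 hη)

lemma flattening_isInGamma : (flattening ha hab hb hu hu2 hη).IsInGamma :=
  ae_of_all _ (flatteningDensity_pos hab hη)

lemma toFun_flattening_of_notMem {t : ℝ} (ht : t ∈ Icc (0:ℝ) 1 \ Ioo a b) :
    (flattening ha hab hb hu hu2 hη).toFun t = t :=
  GammaTilde.toFun_eq_self_of_deriv_eq_one _ (fun _ hs => flatteningDensity_of_notMem hs.2) ht

lemma toFun_flattening_mem_Ioo {t : ℝ} (ht : t ∈ Ioo a b) :
    (flattening ha hab hb hu hu2 hη).toFun t ∈ Ioo a b := by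
  obtain ⟨c, hc, hcD⟩ := exists_pos_le_flatteningDensity (u := u) hab hη
  have hmono := (flattening ha hab hb hu hu2 hη).strictMonoOn_of_le_deriv hc fun s _ => hcD s
  have haI : a ∈ Icc (0:ℝ) 1 \ Ioo a b := ⟨⟨ha, hab.le.trans hb⟩, fun h => lt_irrefl a h.1⟩
  have hbI : b ∈ Icc (0:ℝ) 1 \ Ioo a b := ⟨⟨ha.trans hab.le, hb⟩, fun h => lt_irrefl b h.2⟩
  have htI : t ∈ Icc (0:ℝ) 1 := Ioo_subset_Icc_self.trans (Icc_subset_Icc ha hb) ht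
  constructor
  · simpa only [toFun_flattening_of_notMem ha hab hb hu hu2 hη haI] using hmono haI.1 htI ht.1
  · simpa only [toFun_flattening_of_notMem ha hab hb hu hu2 hη hbI] using hmono htI hbI.1 ht.2

lemma norm_act_flatten_sub_sq {t : ℝ} (ht : t ∈ Icc (0:ℝ) 1) :
    ‖act (flatten a b u) (flattening ha hab hb hu hu2 hη) t - u t‖ ^ 2
      = (Ioo a b).indicator (flatteningError a b u η) t := by
  by_cases hmem : t ∈ Ioo a b
  · rw [indicator_of_mem hmem, act, flatten,
      piecewise_eq_of_mem _ _ _ (toFun_flattening_mem_Ioo ha hab hb hu hu2 hη hmem)]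
    change ‖√(flatteningDensity a b u η t) • _ - u t‖ ^ 2 = _
    rw [flatteningDensity_of_mem hmem, flatteningError, Real.norm_eq_abs, sq_abs, smul_eq_mul,
      mul_comm]
  · rw [indicator_of_notMem hmem, act, toFun_flattening_of_notMem ha hab hb hu hu2 hη ⟨ht, hmem⟩,
      flatten, piecewise_eq_of_notMem _ _ _ hmem]
    change ‖√(flatteningDensity a b u η t) • _ - u t‖ ^ 2 = _
    rw [flatteningDensity_of_notMem hmem, Real.sqrt_one, one_smul, sub_self, norm_zero]
    norm_num

lemma L2dist_act_flatten :
    L2dist (act (flatten a b u) (flattening ha hab hb hu hu2 hη)) u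
      = √(∫ t in Ioo a b, flatteningError a b u η t) := by
  rw [L2dist, setIntegral_congr_fun measurableSet_Icc fun t ht =>
      norm_act_flatten_sub_sq ha hab hb hu hu2 hη ht, integral_indicator measurableSet_Ioo,
    Measure.restrict_restrict measurableSet_Ioo,
    inter_eq_left.2 (Ioo_subset_Icc_self.trans (Icc_subset_Icc ha hb))]

end Reparametrization

lemma tendsto_integral_flatteningError (ha : 0 ≤ a) (hab : a < b) (hb : b ≤ 1)
    (hu : Measurable u) (hu2 : MemLp u 2 μ01)
    (hnn : ∀ᵐ t ∂(volume.restrict (Ioo a b)), 0 ≤ u t) :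
    Tendsto (fun η => ∫ t in Ioo a b, flatteningError a b u η t) (𝓝[>] 0) (𝓝 0) := by
  rcases (integral_nonneg fun _ => sq_nonneg _ : 0 ≤ ∫ s in Ioo a b, u s ^ 2).eq_or_lt with hm | hm
  · have hzero : ∀ η, ∫ t in Ioo a b, flatteningError a b u η t = 0 := fun η => by
      simp only [flatteningError, ← hm, zero_div, Real.sqrt_zero, zero_mul, zero_sub, neg_sq]
    simpa only [hzero] using tendsto_const_nhds
  have hu2' : IntegrableOn (fun t => u t ^ 2) (Ioo a b) :=
    IntegrableOn.mono_set hu2.integrable_sq (Ioo_subset_Icc_self.trans (Icc_subset_Icc ha hb))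
  have hlim := tendsto_integral_filter_of_dominated_convergence
    (fun t => 2 * (u t ^ 2 + 1) + 2 * u t ^ 2) (F := fun η t => flatteningError a b u η t)
    (f := fun _ => 0) (μ := volume.restrict (Ioo a b)) (l := 𝓝[>] 0)
    (Eventually.of_forall fun η => by unfold flatteningError; fun_prop)
    ?_ (((hu2'.add (integrable_const 1)).const_mul 2).add (hu2'.const_mul 2)) ?_
  · simpa only [integral_zero] using hlim
  · filter_upwards [Ioc_mem_nhdsGT zero_lt_one] with η hη
    refine ae_of_all _ fun t => ?_
    have hX := sq_sqrt_div_mul_sqrt_le (u t) hm.le (sub_pos.2 hab) hη.1.le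
    rw [flatteningError, Real.norm_of_nonneg (sq_nonneg _)]
    nlinarith [sq_nonneg (√((∫ s in Ioo a b, u s ^ 2) / (b - a)) *
      √((u t ^ 2 + η) * ((b - a) / ((∫ s in Ioo a b, u s ^ 2) + η * (b - a)))) + u t), hη.2]
  · filter_upwards [hnn] with t ht
    have h := (((tendsto_sqrt_div_mul_sqrt (u t) hm (sub_pos.2 hab)).mono_left
      (nhdsWithin_le_nhds (s := Ioi 0))).sub_const (u t)).pow 2
    rwa [abs_of_nonneg ht, sub_self, zero_pow two_ne_zero] at h

lemma exists_L2dist_act_flatten_lt (ha : 0 ≤ a) (hab : a < b) (hb : b ≤ 1) (hu : Measurable u)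
    (hu2 : MemLp u 2 μ01) (hnn : ∀ᵐ t ∂(volume.restrict (Ioo a b)), 0 ≤ u t) {ε : ℝ}
    (hε : 0 < ε) :
    ∃ η, ∃ hη : 0 < η, L2dist (act (flatten a b u) (flattening ha hab hb hu hu2 hη)) u < ε := by
  obtain ⟨η, hηε, hη⟩ := (((tendsto_integral_flatteningError ha hab hb hu hu2 hnn).eventually
    (gt_mem_nhds (pow_pos hε 2))).and self_mem_nhdsWithin).exists
  exact ⟨η, hη, by rw [L2dist_act_flatten]; exact (Real.sqrt_lt' hε).2 hηε⟩

lemma memLp_flatten (hu2 : MemLp u 2 μ01) : MemLp (flatten a b u) 2 μ01 :=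
  MemLp.piecewise measurableSet_Ioo (memLp_const _) (hu2.restrict _)

lemma orbitClosure_flatten_of_measurable (ha : 0 ≤ a) (hab : a < b) (hb : b ≤ 1)
    (hu : Measurable u) (hu2 : MemLp u 2 μ01)
    (hnn : ∀ᵐ t ∂(volume.restrict (Ioo a b)), 0 ≤ u t) :
    orbitClosure (flatten a b u) = orbitClosure u := by
  refine orbitClosure_eq_of_mem_of_mem ⟨memLp_flatten hu2, fun ε hε => ?_⟩
    ⟨hu2, fun ε hε => ?_⟩
  · obtain ⟨η, hη, hlt⟩ := exists_L2dist_act_flatten_lt ha hab hb hu hu2 hnn hε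
    obtain ⟨c, hc, hcD⟩ := exists_pos_le_flatteningDensity (u := u) hab hη
    have hGc : ∀ t ∈ Icc (0:ℝ) 1, c ≤ (flattening ha hab hb hu hu2 hη).deriv' t := fun t _ => hcD t
    have hGm : Measurable (flattening ha hab hb hu hu2 hη).deriv' :=
      measurable_flatteningDensity hu η
    refine ⟨_, act_mem_orbit u (GammaTilde.inv_isInGamma _ hc hGc hGm), ?_⟩
    rwa [GammaTilde.L2dist_act_inv _ hc hGc hGm hu2.1 (memLp_flatten hu2).1, L2dist_comm]
  · obtain ⟨η, hη, hlt⟩ := exists_L2dist_act_flatten_lt ha hab hb hu hu2 hnn hε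
    exact ⟨_, act_mem_orbit _ (flattening_isInGamma ha hab hb hu hu2 hη), hlt⟩

lemma flatten_congr_ae {q w : ℝ → ℝ}
    (h2 : ∫ t in Ioo a b, q t ^ 2 = ∫ t in Ioo a b, w t ^ 2)
    (h3 : ∀ᵐ t ∂(volume.restrict (Icc (0:ℝ) 1 \ Ioo a b)), q t = w t) :
    flatten a b q =ᵐ[μ01] flatten a b w := by
  rw [ae_restrict_iff' (measurableSet_Icc.diff measurableSet_Ioo)] at h3
  filter_upwards [ae_restrict_mem measurableSet_Icc, ae_restrict_of_ae h3] with t ht htw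
  by_cases hmem : t ∈ Ioo a b
  · simp only [flatten, piecewise_eq_of_mem _ _ _ hmem, h2]
  · simp only [flatten, piecewise_eq_of_notMem _ _ _ hmem, htw ⟨ht, hmem⟩]

lemma orbitClosure_flatten (ha : 0 ≤ a) (hab : a < b) (hb : b ≤ 1) (hu2 : MemLp u 2 μ01)
    (hnn : ∀ᵐ t ∂(volume.restrict (Ioo a b)), 0 ≤ u t) :
    orbitClosure (flatten a b u) = orbitClosure u := by
  have hae : u =ᵐ[μ01] hu2.1.mk u := hu2.1.ae_eq_mk
  have hsub : Ioo a b ⊆ Icc (0:ℝ) 1 := Ioo_subset_Icc_self.trans (Icc_subset_Icc ha hb)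
  have hIoo := ae_restrict_of_ae_restrict_of_subset hsub hae
  rw [orbitClosure_congr_ae (flatten_congr_ae (integral_congr_ae (hIoo.mono fun t ht => by
      simp only [ht])) (ae_restrict_of_ae_restrict_of_subset sdiff_subset hae)),
    orbitClosure_congr_ae hae]
  exact orbitClosure_flatten_of_measurable ha hab hb hu2.1.stronglyMeasurable_mk.measurable
    (hu2.ae_eq hae) (hnn.mp (hIoo.mono fun t ht h => ht ▸ h))

end Flattening

theorem same_closed_orbit_of_local_modification_general (a b : ℝ)
    (ha : 0 ≤ a) (hab : a < b) (hb : b ≤ 1)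
    (q w : ℝ → ℝ) (hq : MemLp q 2 μ01) (hw : MemLp w 2 μ01)
    (h1 : ∀ᵐ t ∂(volume.restrict (Set.Ioo a b)), 0 ≤ q t ∧ 0 ≤ w t)
    (h2 : ∫ t in Set.Ioo a b, (q t)^2 = ∫ t in Set.Ioo a b, (w t)^2)
    (h3 : ∀ᵐ t ∂(volume.restrict (Set.Icc (0:ℝ) 1 \ Set.Ioo a b)), q t = w t) :
    orbitClosure q = orbitClosure w :=
  calc orbitClosure q = orbitClosure (flatten a b q) :=
        (orbitClosure_flatten ha hab hb hq (h1.mono fun _ h => h.1)).symm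
    _ = orbitClosure (flatten a b w) := orbitClosure_congr_ae (flatten_congr_ae h2 h3)
    _ = orbitClosure w := orbitClosure_flatten ha hab hb hw (h1.mono fun _ h => h.2)

/-- if `q, w ∈ L²(I,ℝ)` are unit vectors that are nonnegative a.e.
on `(a,b)`, have equal square-integrals over `(a,b)`, and agree a.e. outside
`(a,b)`, then `[q] = [w]`. -/
theorem same_closed_orbit_of_local_modification (a b : ℝ)
    (ha : 0 ≤ a) (hab : a < b) (hb : b ≤ 1)
    (q w : ℝ → ℝ) (hq : MemLp q 2 μ01) (hw : MemLp w 2 μ01)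
    (hqnorm : ∫ t in Set.Icc (0:ℝ) 1, (q t)^2 = 1)
    (hwnorm : ∫ t in Set.Icc (0:ℝ) 1, (w t)^2 = 1)
    (h1 : ∀ᵐ t ∂(volume.restrict (Set.Ioo a b)), 0 ≤ q t ∧ 0 ≤ w t)
    (h2 : ∫ t in Set.Ioo a b, (q t)^2 = ∫ t in Set.Ioo a b, (w t)^2)
    (h3 : ∀ᵐ t ∂(volume.restrict (Set.Icc (0:ℝ) 1 \ Set.Ioo a b)), q t = w t) :
    orbitClosure q = orbitClosure w :=
  same_closed_orbit_of_local_modification_general a b ha hab hb q w hq hw h1 h2 h3
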